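/- arXiv:1901.08505 — 3 statements merged into one kernel-verified Lean document; each statement's English description precedes it below -/
import Mathlib

section
/- Let η > 0 and γ ≥ 0, and let x_z : ℝ → ℝ be differentiable with |x_z'(t)| ≤ γ for all t. Let x_u : [t₀, ∞) → ℝ be differentiable, satisfy x_u'(t) = η(x_u(t) − x_z(t)) for all t ≥ t₀, and satisfy the stability condition x_u(t₀) = η ∫_{t₀}^∞ e^{−η(τ−t₀)} x_z(τ) dτ. Then |x_u(t) − x_z(t)| ≤ γ/η for all t ≥ t₀. -/
/-!
The stability condition propagates along the flow: with `f τ = e^{-η(τ-t₀)} x_z(τ)`, the function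
`s ↦ e^{-η(s-t₀)} x_u(s) + η ∫_{t₀}^s f` has zero derivative, so for every `t ≥ t₀` the value
`x_u(t)` is the stable value `η ∫_t^∞ e^{-η(τ-t)} x_z(τ) dτ`. Since `η e^{-η(τ-t)}` is a probability
density on `(t, ∞)` with mean `t + 1/η`, the stable value minus `x_z(t)` is the average of
`x_z(τ) - x_z(t)`, whose absolute value is at most `γ (τ - t)`; averaging gives `γ / η`.
-/

open MeasureTheory Real Set Filter Topology

lemma hasDerivAt_exp_neg_mul_sub (η t τ : ℝ) :
    HasDerivAt (fun τ ↦ exp (-η * (τ - t))) (-η * exp (-η * (τ - t))) τ := by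
  simpa [mul_comm] using (((hasDerivAt_id τ).sub_const t).const_mul (-η)).exp

section ExponentialMoments

variable {η : ℝ}

lemma tendsto_exp_neg_mul_sub_atTop (hη : 0 < η) (t : ℝ) :
    Tendsto (fun τ ↦ exp (-η * (τ - t))) atTop (𝓝 0) :=
  tendsto_exp_atBot.comp <|
    (tendsto_atTop_add_const_right _ _ tendsto_id).const_mul_atTop_of_neg (neg_lt_zero.mpr hη)

lemma tendsto_sub_mul_exp_neg_mul_sub_atTop (hη : 0 < η) (t : ℝ) :
    Tendsto (fun τ ↦ (τ - t) * exp (-η * (τ - t))) atTop (𝓝 0) := by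
  have hlin : Tendsto (fun τ : ℝ ↦ η * (τ - t)) atTop atTop :=
    (tendsto_atTop_add_const_right _ _ tendsto_id).const_mul_atTop hη
  have h := ((tendsto_pow_mul_exp_neg_atTop_nhds_zero 1).comp hlin).const_mul η⁻¹
  rw [mul_zero] at h
  refine h.congr fun τ ↦ ?_
  simp only [Function.comp, pow_one, neg_mul]
  field_simp

lemma hasDerivAt_zeroth_antideriv (hη : 0 < η) (t τ : ℝ) :
    HasDerivAt (fun τ ↦ -η⁻¹ * exp (-η * (τ - t))) (exp (-η * (τ - t))) τ :=
  ((hasDerivAt_exp_neg_mul_sub η t τ).const_mul _).congr_deriv (by field_simp)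

lemma hasDerivAt_first_antideriv (hη : 0 < η) (t τ : ℝ) :
    HasDerivAt (fun τ ↦ -(η⁻¹ * (τ - t) + (η ^ 2)⁻¹) * exp (-η * (τ - t)))
      ((τ - t) * exp (-η * (τ - t))) τ := by
  have hpoly : HasDerivAt (fun τ ↦ -(η⁻¹ * (τ - t) + (η ^ 2)⁻¹)) (-(η⁻¹ * 1)) τ :=
    ((((hasDerivAt_id τ).sub_const t).const_mul η⁻¹).add_const (η ^ 2)⁻¹).neg
  refine (hpoly.mul (hasDerivAt_exp_neg_mul_sub η t τ)).congr_deriv ?_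
  field_simp
  ring

lemma tendsto_first_antideriv_atTop (hη : 0 < η) (t : ℝ) :
    Tendsto (fun τ ↦ -(η⁻¹ * (τ - t) + (η ^ 2)⁻¹) * exp (-η * (τ - t))) atTop (𝓝 0) := by
  have h := ((tendsto_sub_mul_exp_neg_mul_sub_atTop hη t).const_mul (-η⁻¹)).add
    ((tendsto_exp_neg_mul_sub_atTop hη t).const_mul (-(η ^ 2)⁻¹))
  rw [mul_zero, mul_zero, add_zero] at h
  exact h.congr fun τ ↦ by ring

lemma tendsto_zeroth_antideriv_atTop (hη : 0 < η) (t : ℝ) :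
    Tendsto (fun τ ↦ -η⁻¹ * exp (-η * (τ - t))) atTop (𝓝 0) := by
  simpa using (tendsto_exp_neg_mul_sub_atTop hη t).const_mul (-η⁻¹)

lemma integrableOn_exp_neg_mul_sub (hη : 0 < η) (t : ℝ) :
    IntegrableOn (fun τ ↦ exp (-η * (τ - t))) (Ioi t) :=
  integrableOn_Ioi_deriv_of_nonneg' (fun τ _ ↦ hasDerivAt_zeroth_antideriv hη t τ)
    (fun _ _ ↦ (exp_pos _).le) (tendsto_zeroth_antideriv_atTop hη t)

lemma integral_exp_neg_mul_sub (hη : 0 < η) (t : ℝ) :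
    ∫ τ in Ioi t, exp (-η * (τ - t)) = η⁻¹ := by
  rw [integral_Ioi_of_hasDerivAt_of_nonneg' (fun τ _ ↦ hasDerivAt_zeroth_antideriv hη t τ)
    (fun _ _ ↦ (exp_pos _).le) (tendsto_zeroth_antideriv_atTop hη t)]
  simp

lemma sub_mul_exp_neg_mul_sub_nonneg {t τ : ℝ} (hτ : τ ∈ Ioi t) :
    0 ≤ (τ - t) * exp (-η * (τ - t)) :=
  mul_nonneg (sub_nonneg.mpr hτ.out.le) (exp_pos _).le

lemma integrableOn_sub_mul_exp_neg_mul_sub (hη : 0 < η) (t : ℝ) :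
    IntegrableOn (fun τ ↦ (τ - t) * exp (-η * (τ - t))) (Ioi t) :=
  integrableOn_Ioi_deriv_of_nonneg' (fun τ _ ↦ hasDerivAt_first_antideriv hη t τ)
    (fun _ hτ ↦ sub_mul_exp_neg_mul_sub_nonneg hτ) (tendsto_first_antideriv_atTop hη t)

lemma integral_sub_mul_exp_neg_mul_sub (hη : 0 < η) (t : ℝ) :
    ∫ τ in Ioi t, (τ - t) * exp (-η * (τ - t)) = (η ^ 2)⁻¹ := by
  rw [integral_Ioi_of_hasDerivAt_of_nonneg' (fun τ _ ↦ hasDerivAt_first_antideriv hη t τ)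
    (fun _ hτ ↦ sub_mul_exp_neg_mul_sub_nonneg hτ) (tendsto_first_antideriv_atTop hη t)]
  simp

end ExponentialMoments

/-- The value of `x_u` at time `t` singled out by the stability condition. -/
noncomputable def stableValue (η : ℝ) (xz : ℝ → ℝ) (t : ℝ) : ℝ :=
  η * ∫ τ in Ioi t, exp (-η * (τ - t)) * xz τ

section LinearGrowth

variable {η γ t : ℝ} {xz : ℝ → ℝ}

lemma norm_exp_neg_mul_sub_mul_sub_le (hgrowth : ∀ τ, t ≤ τ → |xz τ - xz t| ≤ γ * (τ - t))
    {τ : ℝ} (hτ : τ ∈ Ioi t) :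
    ‖exp (-η * (τ - t)) * (xz τ - xz t)‖ ≤ γ * ((τ - t) * exp (-η * (τ - t))) := by
  calc ‖exp (-η * (τ - t)) * (xz τ - xz t)‖ = exp (-η * (τ - t)) * |xz τ - xz t| := by
        rw [norm_mul, norm_of_nonneg (exp_pos _).le, norm_eq_abs]
    _ ≤ exp (-η * (τ - t)) * (γ * (τ - t)) := by gcongr; exact hgrowth τ hτ.out.le
    _ = γ * ((τ - t) * exp (-η * (τ - t))) := by ring

lemma integrableOn_exp_neg_mul_sub_mul_sub (hη : 0 < η) (hxz : Continuous xz)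
    (hgrowth : ∀ τ, t ≤ τ → |xz τ - xz t| ≤ γ * (τ - t)) :
    IntegrableOn (fun τ ↦ exp (-η * (τ - t)) * (xz τ - xz t)) (Ioi t) :=
  ((integrableOn_sub_mul_exp_neg_mul_sub hη t).const_mul γ).mono'
    (by fun_prop : Continuous fun τ ↦ exp (-η * (τ - t)) * (xz τ - xz t)).aestronglyMeasurable
    ((ae_restrict_mem measurableSet_Ioi).mono fun _ hτ ↦ norm_exp_neg_mul_sub_mul_sub_le hgrowth hτ)

lemma integrableOn_exp_neg_mul_sub_mul (hη : 0 < η) (hxz : Continuous xz)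
    (hgrowth : ∀ τ, t ≤ τ → |xz τ - xz t| ≤ γ * (τ - t)) :
    IntegrableOn (fun τ ↦ exp (-η * (τ - t)) * xz τ) (Ioi t) :=
  ((integrableOn_exp_neg_mul_sub_mul_sub hη hxz hgrowth).add
    ((integrableOn_exp_neg_mul_sub hη t).mul_const (xz t))).congr_fun
    (fun τ _ ↦ by simp only [Pi.add_apply]; ring) measurableSet_Ioi

lemma stableValue_sub_eq (hη : 0 < η) (hxz : Continuous xz)
    (hgrowth : ∀ τ, t ≤ τ → |xz τ - xz t| ≤ γ * (τ - t)) :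
    stableValue η xz t - xz t = η * ∫ τ in Ioi t, exp (-η * (τ - t)) * (xz τ - xz t) := by
  have hmean : xz t = η * ∫ τ in Ioi t, exp (-η * (τ - t)) * xz t := by
    rw [integral_mul_const, integral_exp_neg_mul_sub hη t, mul_inv_cancel_left₀ hη.ne']
  rw [stableValue, hmean, ← mul_sub, ← integral_sub
    (integrableOn_exp_neg_mul_sub_mul hη hxz hgrowth)
    ((integrableOn_exp_neg_mul_sub hη t).mul_const _), ← hmean]
  simp only [mul_sub]

lemma abs_stableValue_sub_le (hη : 0 < η) (hxz : Continuous xz)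
    (hgrowth : ∀ τ, t ≤ τ → |xz τ - xz t| ≤ γ * (τ - t)) :
    |stableValue η xz t - xz t| ≤ γ / η := by
  have hbound : ‖∫ τ in Ioi t, exp (-η * (τ - t)) * (xz τ - xz t)‖ ≤ γ * (η ^ 2)⁻¹ := by
    rw [← integral_sub_mul_exp_neg_mul_sub hη t, ← integral_const_mul]
    exact norm_integral_le_of_norm_le ((integrableOn_sub_mul_exp_neg_mul_sub hη t).const_mul γ)
      ((ae_restrict_mem measurableSet_Ioi).mono fun _ hτ ↦
        norm_exp_neg_mul_sub_mul_sub_le hgrowth hτ)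
  rw [stableValue_sub_eq hη hxz hgrowth, abs_mul, abs_of_pos hη, ← norm_eq_abs]
  calc η * ‖∫ τ in Ioi t, exp (-η * (τ - t)) * (xz τ - xz t)‖ ≤ η * (γ * (η ^ 2)⁻¹) :=
        mul_le_mul_of_nonneg_left hbound hη.le
    _ = γ / η := by field_simp

end LinearGrowth

lemma eq_stableValue_of_hasDerivAt {η t₀ t : ℝ} {xz xu : ℝ → ℝ} (hxz : Continuous xz)
    (hint : IntegrableOn (fun τ ↦ exp (-η * (τ - t₀)) * xz τ) (Ioi t₀))
    (hode : ∀ t, t₀ ≤ t → HasDerivAt xu (η * (xu t - xz t)) t)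
    (hinit : xu t₀ = stableValue η xz t₀) (ht : t₀ ≤ t) :
    xu t = stableValue η xz t := by
  set f := fun τ ↦ exp (-η * (τ - t₀)) * xz τ
  set F := fun s ↦ exp (-η * (s - t₀)) * xu s + η * ∫ τ in t₀..s, f τ
  have hf : Continuous f := by fun_prop
  have hF : ∀ s, t₀ ≤ s → HasDerivAt F 0 s := by
    intro s hs
    have hprim := intervalIntegral.integral_hasDerivAt_right (hf.intervalIntegrable t₀ s)
      hf.aestronglyMeasurable.stronglyMeasurableAtFilter hf.continuousAt
    refine (((hasDerivAt_exp_neg_mul_sub η t₀ s).mul (hode s hs)).add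
      (hprim.const_mul η)).congr_deriv ?_
    ring
  have hconst : F t = F t₀ := constant_of_has_deriv_right_zero
    (fun s hs ↦ (hF s hs.1).continuousAt.continuousWithinAt)
    (fun s hs ↦ (hF s hs.1).hasDerivWithinAt) t ⟨ht, le_rfl⟩
  have hkey : exp (-η * (t - t₀)) * xu t = η * ∫ τ in Ioi t, f τ := by
    simp only [F, sub_self, mul_zero, exp_zero, one_mul, intervalIntegral.integral_same,
      add_zero] at hconst
    rw [stableValue] at hinit
    rw [← intervalIntegral.integral_Ioi_sub_Ioi hint ht] at hconst
    linarith
  have hshift : ∫ τ in Ioi t, f τ =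
      exp (-η * (t - t₀)) * ∫ τ in Ioi t, exp (-η * (τ - t)) * xz τ := by
    rw [← integral_const_mul]
    congr 1 with τ
    rw [← mul_assoc, ← exp_add]
    simp only [f]
    ring_nf
  refine mul_left_cancel₀ (exp_pos (-η * (t - t₀))).ne' ?_
  rw [hkey, hshift, stableValue]
  ring

theorem stmt_2_general (η γ t₀ : ℝ) (hη : 0 < η)
    (xz xu : ℝ → ℝ)
    (hxz : Differentiable ℝ xz) (hxz' : ∀ t, |deriv xz t| ≤ γ)
    (hode : ∀ t, t₀ ≤ t → HasDerivAt xu (η * (xu t - xz t)) t)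
    (hinit : xu t₀ = η * ∫ τ in Set.Ioi t₀, Real.exp (-η * (τ - t₀)) * xz τ) :
    ∀ t, t₀ ≤ t → |xu t - xz t| ≤ γ / η := by
  have hgrowth : ∀ s τ, s ≤ τ → |xz τ - xz s| ≤ γ * (τ - s) := fun s τ hsτ ↦ by
    simpa [abs_of_nonneg (sub_nonneg.mpr hsτ)] using convex_univ.norm_image_sub_le_of_norm_deriv_le
      (fun x _ ↦ hxz x) (fun x _ ↦ hxz' x) (mem_univ s) (mem_univ τ)
  intro t ht
  rw [eq_stableValue_of_hasDerivAt hxz.continuous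
    (integrableOn_exp_neg_mul_sub_mul hη hxz.continuous (hgrowth t₀)) hode hinit ht]
  exact abs_stableValue_sub_le hη hxz.continuous (hgrowth t)

/-- If `x_u' = η(x_u − x_z)` for `t ≥ t₀`, `x_z` has derivative bounded by `γ`,
and the stability condition holds at `t₀`, then `|x_u(t) − x_z(t)| ≤ γ/η` for all `t ≥ t₀`. -/
theorem stmt_2 (η γ t₀ : ℝ) (hη : 0 < η) (hγ : 0 ≤ γ)
    (xz xu : ℝ → ℝ)
    (hxz : Differentiable ℝ xz) (hxz' : ∀ t, |deriv xz t| ≤ γ)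
    (hode : ∀ t, t₀ ≤ t → HasDerivAt xu (η * (xu t - xz t)) t)
    (hinit : xu t₀ = η * ∫ τ in Set.Ioi t₀, Real.exp (-η * (τ - t₀)) * xz τ) :
    ∀ t, t₀ ≤ t → |xu t - xz t| ≤ γ / η :=
  stmt_2_general η γ t₀ hη xz xu hxz hxz' hode hinit
end

section
/- (Proposition 2, truncated tail) Let η > 0, δ > 0, t_k ∈ ℝ, x_z^k ∈ ℝ, C a positive integer, and let (v_i)_{i≥0} be a sequence of reals with v_i = 0 for all i ≥ C. Define the piecewise-linear ZMP trajectory x_z(t) = x_z^k + Σ_{i=0}^∞ (ρ(t − t_{k+i}) − ρ(t − t_{k+i+1})) v_i, where ρ(t) = max(t,0) and t_{k+i} = t_k + iδ, and set x_u^k = η ∫_{t_k}^∞ e^{−η(τ−t_k)} x_z(τ) dτ. Then: (a) Σ_{i=0}^{C−1} e^{−iηδ} v_i = (η/(1 − e^{−ηδ})) · (x_u^k − x_z^k) (the truncated-tail stability constraint); and (b) η ∫_{t_{k+C}}^∞ e^{−η(τ−t_{k+C})} x_z(τ) dτ = x_z(t_{k+C}) (the capturability terminal constraint). -/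
/-!
Against the weight `e^{-η(τ-c)}` on `(c, ∞)`, the ramp `max (τ - a) 0` with `a ≥ c` integrates to
`e^{-η(a-c)}/η²`. The ZMP trajectory is `x_z^k` plus finitely many differences of such ramps, so
sample `i` contributes `η (e^{-iηδ} - e^{-(i+1)ηδ}) v_i / η² = e^{-iηδ} (1 - e^{-ηδ}) v_i / η` to
`x_u^k - x_z^k`, which is (a). After `t_{k+C}` every ramp has saturated, so `x_z` is constant there
and its exponential average is that constant, which is (b).
-/

open MeasureTheory Real Set Filter Topology

section ExpWeight

variable {η : ℝ}

lemma hasDerivAt_exp_weight_primitive (hη : η ≠ 0) (c x : ℝ) :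
    HasDerivAt (fun τ => -exp (-η * (τ - c)) / η) (exp (-η * (x - c))) x := by
  have h := ((((hasDerivAt_id x).sub_const c).const_mul (-η)).exp.neg).div_const η
  refine h.congr_deriv ?_
  simp only [id]
  field_simp

lemma hasDerivAt_exp_weight_moment_primitive (hη : η ≠ 0) (a c x : ℝ) :
    HasDerivAt (fun τ => -exp (-η * (τ - c)) * ((τ - a) / η + 1 / η ^ 2))
      (exp (-η * (x - c)) * (x - a)) x := by
  have h := ((((hasDerivAt_id x).sub_const c).const_mul (-η)).exp.neg).mul
    ((((hasDerivAt_id x).sub_const a).div_const η).add_const (1 / η ^ 2))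
  refine h.congr_deriv ?_
  change -(exp (-η * (x - c)) * (-η * 1)) * ((x - a) / η + 1 / η ^ 2)
    + -exp (-η * (x - c)) * (1 / η) = _
  field_simp
  ring

lemma tendsto_const_mul_sub_atTop (hη : 0 < η) (c : ℝ) :
    Tendsto (fun τ => η * (τ - c)) atTop atTop :=
  (tendsto_atTop_add_const_right _ (-c) tendsto_id).const_mul_atTop hη

lemma tendsto_exp_weight_moment_primitive (hη : 0 < η) (a c : ℝ) :
    Tendsto (fun τ => -exp (-η * (τ - c)) * ((τ - a) / η + 1 / η ^ 2)) atTop (𝓝 0) := by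
  have h1 : Tendsto (fun u => u * exp (-u)) atTop (𝓝 0) := by
    simpa using tendsto_pow_mul_exp_neg_atTop_nhds_zero 1
  have key : Tendsto (fun u => -(u * exp (-u) / η ^ 2 + exp (-u) * ((c - a) / η + 1 / η ^ 2)))
      atTop (𝓝 0) := by
    convert ((h1.div_const (η ^ 2)).add
      (tendsto_exp_neg_atTop_nhds_zero.mul_const ((c - a) / η + 1 / η ^ 2))).neg using 2
    simp
  refine (key.comp (tendsto_const_mul_sub_atTop hη c)).congr fun τ => ?_
  simp only [Function.comp_apply, neg_mul]
  field_simp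
  ring

lemma tendsto_exp_weight_primitive (hη : 0 < η) (c : ℝ) :
    Tendsto (fun τ => -exp (-η * (τ - c)) / η) atTop (𝓝 0) := by
  simpa [neg_mul] using
    ((tendsto_exp_neg_atTop_nhds_zero.comp (tendsto_const_mul_sub_atTop hη c)).neg.div_const η)

lemma integrableOn_exp_weight (hη : 0 < η) (a c : ℝ) :
    IntegrableOn (fun τ => exp (-η * (τ - c))) (Ioi a) :=
  integrableOn_Ioi_deriv_of_nonneg' (fun x _ => hasDerivAt_exp_weight_primitive hη.ne' c x)
    (fun _ _ => (exp_pos _).le) (tendsto_exp_weight_primitive hη c)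

lemma integral_exp_weight (hη : 0 < η) (a c : ℝ) :
    ∫ τ in Ioi a, exp (-η * (τ - c)) = exp (-η * (a - c)) / η := by
  rw [integral_Ioi_of_hasDerivAt_of_nonneg'
    (fun x _ => hasDerivAt_exp_weight_primitive hη.ne' c x) (fun _ _ => (exp_pos _).le)
    (tendsto_exp_weight_primitive hη c)]
  ring

lemma integrableOn_exp_weight_mul_sub (hη : 0 < η) (a c : ℝ) :
    IntegrableOn (fun τ => exp (-η * (τ - c)) * (τ - a)) (Ioi a) :=
  integrableOn_Ioi_deriv_of_nonneg'
    (fun x _ => hasDerivAt_exp_weight_moment_primitive hη.ne' a c x)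
    (fun _ hx => mul_nonneg (exp_pos _).le (sub_nonneg.2 (le_of_lt hx)))
    (tendsto_exp_weight_moment_primitive hη a c)

lemma integral_exp_weight_mul_sub (hη : 0 < η) (a c : ℝ) :
    ∫ τ in Ioi a, exp (-η * (τ - c)) * (τ - a) = exp (-η * (a - c)) / η ^ 2 := by
  rw [integral_Ioi_of_hasDerivAt_of_nonneg'
    (fun x _ => hasDerivAt_exp_weight_moment_primitive hη.ne' a c x)
    (fun _ hx => mul_nonneg (exp_pos _).le (sub_nonneg.2 (le_of_lt hx)))
    (tendsto_exp_weight_moment_primitive hη a c)]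
  ring

lemma max_sub_eq_zero_of_notMem_Ioi {a τ : ℝ} (hτ : τ ∉ Ioi a) : max (τ - a) 0 = 0 :=
  max_eq_right (sub_nonpos.2 (not_lt.1 hτ))

lemma integrableOn_exp_weight_mul_max_sub (hη : 0 < η) (a c : ℝ) :
    IntegrableOn (fun τ => exp (-η * (τ - c)) * max (τ - a) 0) (Ioi c) :=
  ((integrableOn_exp_weight_mul_sub hη a c).congr_fun
      (fun τ hτ => by rw [max_eq_left (sub_nonneg.2 (le_of_lt hτ))])
      measurableSet_Ioi).of_forall_sdiff_eq_zero
    measurableSet_Ioi fun τ hτ => by simp [max_sub_eq_zero_of_notMem_Ioi hτ.2]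

lemma integral_exp_weight_mul_max_sub (hη : 0 < η) {a c : ℝ} (hca : c ≤ a) :
    ∫ τ in Ioi c, exp (-η * (τ - c)) * max (τ - a) 0 = exp (-η * (a - c)) / η ^ 2 := by
  rw [setIntegral_eq_of_subset_of_forall_sdiff_eq_zero measurableSet_Ioi (Ioi_subset_Ioi hca)
      fun τ hτ => by simp [max_sub_eq_zero_of_notMem_Ioi hτ.2],
    setIntegral_congr_fun measurableSet_Ioi fun τ hτ => by
      rw [max_eq_left (sub_nonneg.2 (le_of_lt hτ))]]
  exact integral_exp_weight_mul_sub hη a c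

lemma integrableOn_exp_weight_mul_ramp (hη : 0 < η) (a b c : ℝ) :
    IntegrableOn (fun τ => exp (-η * (τ - c)) * (max (τ - a) 0 - max (τ - b) 0)) (Ioi c) := by
  simp_rw [mul_sub (exp _)]
  exact (integrableOn_exp_weight_mul_max_sub hη a c).sub
    (integrableOn_exp_weight_mul_max_sub hη b c)

lemma integral_exp_weight_mul_ramp (hη : 0 < η) {a b c : ℝ} (hca : c ≤ a) (hcb : c ≤ b) :
    ∫ τ in Ioi c, exp (-η * (τ - c)) * (max (τ - a) 0 - max (τ - b) 0)
      = (exp (-η * (a - c)) - exp (-η * (b - c))) / η ^ 2 := by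
  simp_rw [mul_sub (exp _)]
  rw [integral_sub (integrableOn_exp_weight_mul_max_sub hη a c)
      (integrableOn_exp_weight_mul_max_sub hη b c),
    integral_exp_weight_mul_max_sub hη hca, integral_exp_weight_mul_max_sub hη hcb, sub_div]

lemma integral_exp_weight_mul_add_sum_ramps (hη : 0 < η) {ι : Type*} (s : Finset ι)
    (x₀ c : ℝ) {a b : ι → ℝ} (v : ι → ℝ) (ha : ∀ i ∈ s, c ≤ a i) (hb : ∀ i ∈ s, c ≤ b i) :
    ∫ τ in Ioi c, exp (-η * (τ - c)) * (x₀ + ∑ i ∈ s, (max (τ - a i) 0 - max (τ - b i) 0) * v i)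
      = x₀ / η + ∑ i ∈ s, (exp (-η * (a i - c)) - exp (-η * (b i - c))) / η ^ 2 * v i := by
  have hramp : ∀ i, IntegrableOn
      (fun τ => exp (-η * (τ - c)) * (max (τ - a i) 0 - max (τ - b i) 0) * v i) (Ioi c) :=
    fun i => (integrableOn_exp_weight_mul_ramp hη (a i) (b i) c).mul_const (v i)
  simp_rw [mul_add, Finset.mul_sum, ← mul_assoc]
  rw [integral_add ((integrableOn_exp_weight hη c c).mul_const x₀)
      (integrable_finsetSum s fun i _ => hramp i),
    integral_finsetSum s fun i _ => hramp i, integral_mul_const, integral_exp_weight hη c c]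
  congr 1
  · rw [sub_self, mul_zero, exp_zero]
    ring
  · refine Finset.sum_congr rfl fun i hi => ?_
    rw [integral_mul_const, integral_exp_weight_mul_ramp hη (ha i hi) (hb i hi)]

lemma mul_integral_exp_weight_of_forall_eq (hη : 0 < η) {f : ℝ → ℝ} {T : ℝ}
    (hf : ∀ τ ∈ Ioi T, f τ = f T) :
    η * ∫ τ in Ioi T, exp (-η * (τ - T)) * f τ = f T := by
  rw [setIntegral_congr_fun measurableSet_Ioi fun τ hτ => by rw [hf τ hτ], integral_mul_const,
    integral_exp_weight hη T T, sub_self, mul_zero, exp_zero]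
  field_simp

end ExpWeight

lemma max_sub_sub_max_sub_of_le {a b τ : ℝ} (hab : a ≤ b) (hbτ : b ≤ τ) :
    max (τ - a) 0 - max (τ - b) 0 = b - a := by
  rw [max_eq_left (by linarith), max_eq_left (by linarith)]
  ring

theorem stmt_9_general (η δ tk xzk : ℝ) (hη : 0 < η) (hδ : 0 < δ)
    (C : ℕ)
    (v : ℕ → ℝ) (hv : ∀ i, C ≤ i → v i = 0)
    (xz : ℝ → ℝ)
    (hxz : ∀ t, xz t = xzk + ∑' i : ℕ,
      (max (t - (tk + i * δ)) 0 - max (t - (tk + (i + 1) * δ)) 0) * v i)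
    (xuk : ℝ)
    (hxuk : xuk = η * ∫ τ in Set.Ioi tk, Real.exp (-η * (τ - tk)) * xz τ) :
    (∑ i ∈ Finset.range C, Real.exp (-(i : ℝ) * η * δ) * v i
        = η / (1 - Real.exp (-η * δ)) * (xuk - xzk)) ∧
    (η * ∫ τ in Set.Ioi (tk + C * δ), Real.exp (-η * (τ - (tk + C * δ))) * xz τ
        = xz (tk + C * δ)) := by
  have hxz_fin : ∀ t, xz t = xzk + ∑ i ∈ Finset.range C,
      (max (t - (tk + i * δ)) 0 - max (t - (tk + (i + 1) * δ)) 0) * v i := fun t => by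
    rw [hxz t, tsum_eq_sum (s := Finset.range C) fun i hi => by
      rw [hv i (by simpa using hi), mul_zero]]
  have hnode : ∀ x : ℝ, 0 ≤ x → tk ≤ tk + x * δ := fun x hx => by nlinarith
  constructor
  · rw [hxuk, setIntegral_congr_fun measurableSet_Ioi fun τ _ => by rw [hxz_fin τ],
      integral_exp_weight_mul_add_sum_ramps hη (Finset.range C) _ _ _
        (fun i _ => hnode i i.cast_nonneg) (fun i _ => hnode (i + 1) (by positivity)),
      mul_add, mul_div_cancel₀ _ hη.ne', add_sub_cancel_left, Finset.mul_sum, Finset.mul_sum]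
    refine Finset.sum_congr rfl fun i _ => ?_
    have hstep : exp (-η * (tk + (i + 1) * δ - tk)) = exp (-(i : ℝ) * η * δ) * exp (-η * δ) := by
      rw [← exp_add]
      ring_nf
    rw [hstep, show -η * (tk + i * δ - tk) = -(i : ℝ) * η * δ by ring]
    have hq' : 1 - exp (-η * δ) ≠ 0 := (sub_pos.2 (exp_lt_one_iff.2 (by nlinarith))).ne'
    generalize exp (-η * δ) = q at hq' ⊢
    field_simp
  · refine mul_integral_exp_weight_of_forall_eq hη fun τ hτ => ?_
    rw [hxz_fin τ, hxz_fin (tk + C * δ)]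
    congr 1
    refine Finset.sum_congr rfl fun i hi => ?_
    have hiC : (i : ℝ) + 1 ≤ C := by exact_mod_cast Finset.mem_range.1 hi
    have hsat : tk + (i + 1) * δ ≤ tk + C * δ := by nlinarith
    have hgap : tk + i * δ ≤ tk + (i + 1) * δ := by nlinarith
    rw [max_sub_sub_max_sub_of_le hgap hsat,
      max_sub_sub_max_sub_of_le hgap (hsat.trans (le_of_lt hτ))]

/-- Proposition 2, truncated tail: if the ZMP velocity samples vanish after
the control horizon (`v_i = 0` for `i ≥ C`), then
(a) `Σ_{i=0}^{C−1} e^{−iηδ} v_i = (η/(1 − e^{−ηδ})) (x_u^k − x_z^k)` (stability constraint),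
and (b) `η ∫_{t_{k+C}}^∞ e^{−η(τ−t_{k+C})} x_z(τ) dτ = x_z(t_{k+C})` (capturability). -/
theorem stmt_9 (η δ tk xzk : ℝ) (hη : 0 < η) (hδ : 0 < δ)
    (C : ℕ) (hC : 0 < C)
    (v : ℕ → ℝ) (hv : ∀ i, C ≤ i → v i = 0)
    (xz : ℝ → ℝ)
    (hxz : ∀ t, xz t = xzk + ∑' i : ℕ,
      (max (t - (tk + i * δ)) 0 - max (t - (tk + (i + 1) * δ)) 0) * v i)
    (xuk : ℝ)
    (hxuk : xuk = η * ∫ τ in Set.Ioi tk, Real.exp (-η * (τ - tk)) * xz τ) :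
    (∑ i ∈ Finset.range C, Real.exp (-(i : ℝ) * η * δ) * v i
        = η / (1 - Real.exp (-η * δ)) * (xuk - xzk)) ∧
    (η * ∫ τ in Set.Ioi (tk + C * δ), Real.exp (-η * (τ - (tk + C * δ))) * xz τ
        = xz (tk + C * δ)) :=
  stmt_9_general η δ tk xzk hη hδ C v hv xz hxz xuk hxuk
end

section
/- (Proposition 3, periodic-tail terminal constraint) Let η > 0, δ > 0, γ ≥ 0, t_k ∈ ℝ, x_z^k ∈ ℝ, C a positive integer, and let (v_i)_{i≥0} be a C-periodic sequence of reals (v_{i+C} = v_i for all i ≥ 0) with |v_i| ≤ γ. Define the piecewise-linear ZMP trajectory x_z(t) = x_z^k + Σ_{i=0}^∞ (ρ(t − t_{k+i}) − ρ(t − t_{k+i+1})) v_i, where ρ(t) = max(t,0) and t_{k+i} = t_k + iδ. Set x_u^k = η ∫_{t_k}^∞ e^{−η(τ−t_k)} x_z(τ) dτ and x_u^{k+C} = η ∫_{t_{k+C}}^∞ e^{−η(τ−t_{k+C})} x_z(τ) dτ. Then x_u^{k+C} − x_z(t_{k+C}) = x_u^k − x_z^k. -/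
/-!
For `t ≥ t_k` the `C`-periodicity of the velocity samples gives
`x_z(t + Cδ) = x_z(t) + S` with `S = δ (v_0 + ⋯ + v_{C-1})`: every ramp that has finished by
then contributes `δ v_i`, and the others are the ramps seen at time `t`, shifted by `C` indices.
Substituting `τ = σ + Cδ` in `x_u^{k+C}` and using `η ∫_0^∞ e^{-ησ} dσ = 1` yields
`x_u^{k+C} = x_u^k + S`, while `x_z(t_{k+C}) = x_z^k + S`. The bound `|v_i| ≤ γ` makes `x_z`
grow at most linearly, which is what makes the exponentially weighted integrals converge.
-/

open MeasureTheory Real Set Filter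

noncomputable section

def rampPulse (t₀ δ : ℝ) (i : ℕ) (t : ℝ) : ℝ :=
  max (t - (t₀ + i * δ)) 0 - max (t - (t₀ + (i + 1) * δ)) 0

def rampSum (t₀ δ : ℝ) (v : ℕ → ℝ) (t : ℝ) : ℝ :=
  ∑' i : ℕ, rampPulse t₀ δ i t * v i

/-- The paper's stable initialization `x_u` at time `a` of the divergent component driven by the
ZMP trajectory `f`. -/
def stableDivergentInit (η a : ℝ) (f : ℝ → ℝ) : ℝ :=
  η * ∫ τ in Ioi a, exp (-η * (τ - a)) * f τ

end

section Ramp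

variable {t₀ δ t : ℝ}

theorem rampPulse_nonneg (hδ : 0 ≤ δ) (i : ℕ) : 0 ≤ rampPulse t₀ δ i t := by
  unfold rampPulse
  have : t - (t₀ + (i + 1) * δ) ≤ t - (t₀ + i * δ) := by linarith
  linarith [max_le_max_right 0 this]

theorem rampPulse_eq_zero {i : ℕ} (hδ : 0 ≤ δ) (ht : t ≤ t₀ + i * δ) :
    rampPulse t₀ δ i t = 0 := by
  unfold rampPulse
  rw [max_eq_right (by linarith), max_eq_right (by linarith)]
  ring

theorem rampPulse_eq_of_le {i : ℕ} (hδ : 0 ≤ δ) (ht : t₀ + (i + 1) * δ ≤ t) :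
    rampPulse t₀ δ i t = δ := by
  unfold rampPulse
  rw [max_eq_left (by linarith), max_eq_left (by linarith)]
  ring

theorem rampPulse_add_add_mul (i C : ℕ) :
    rampPulse t₀ δ (i + C) (t + C * δ) = rampPulse t₀ δ i t := by
  unfold rampPulse
  push_cast
  ring_nf

theorem sum_range_rampPulse {N : ℕ} (ht : t ≤ t₀ + N * δ) :
    ∑ i ∈ Finset.range N, rampPulse t₀ δ i t = max (t - t₀) 0 := by
  unfold rampPulse
  have htel := Finset.sum_range_sub' (fun i : ℕ => max (t - (t₀ + i * δ)) 0) N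
  push_cast at htel
  rw [htel, max_eq_right (by linarith : t - (t₀ + N * δ) ≤ 0)]
  simp

theorem exists_le_add_nat_mul (hδ : 0 < δ) (t₀ t : ℝ) : ∃ N : ℕ, t ≤ t₀ + N * δ := by
  obtain ⟨N, hN⟩ := exists_nat_ge ((t - t₀) / δ)
  exact ⟨N, by rw [div_le_iff₀ hδ] at hN; linarith⟩

variable {v : ℕ → ℝ}

theorem rampSum_eq_sum_range (hδ : 0 ≤ δ) {N : ℕ} (ht : t ≤ t₀ + N * δ) :
    rampSum t₀ δ v t = ∑ i ∈ Finset.range N, rampPulse t₀ δ i t * v i := by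
  refine tsum_eq_sum fun i hi => ?_
  have hNi : (N : ℝ) ≤ i := by exact_mod_cast not_lt.1 (Finset.mem_range.not.1 hi)
  rw [rampPulse_eq_zero hδ (by nlinarith), zero_mul]

theorem rampSum_self (hδ : 0 ≤ δ) : rampSum t₀ δ v t₀ = 0 := by
  rw [rampSum_eq_sum_range hδ (N := 0) (by simp), Finset.sum_range_zero]

theorem continuous_rampSum (hδ : 0 < δ) : Continuous (rampSum t₀ δ v) := by
  refine continuous_iff_continuousAt.2 fun t => ?_
  obtain ⟨N, hN⟩ := exists_le_add_nat_mul hδ t₀ (t + 1)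
  have hsum : Continuous fun s => ∑ i ∈ Finset.range N, rampPulse t₀ δ i s * v i := by
    unfold rampPulse
    fun_prop
  refine hsum.continuousAt.congr ?_
  filter_upwards [Iio_mem_nhds (by linarith : t < t₀ + N * δ)] with s hs
  exact (rampSum_eq_sum_range hδ.le (le_of_lt hs)).symm

theorem abs_rampSum_le (hδ : 0 < δ) {M : ℝ} (hv : ∀ i, |v i| ≤ M) :
    |rampSum t₀ δ v t| ≤ M * max (t - t₀) 0 := by
  obtain ⟨N, hN⟩ := exists_le_add_nat_mul hδ t₀ t
  rw [rampSum_eq_sum_range hδ.le hN, ← sum_range_rampPulse hN, Finset.mul_sum]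
  refine (Finset.abs_sum_le_sum_abs _ _).trans (Finset.sum_le_sum fun i _ => ?_)
  rw [abs_mul, abs_of_nonneg (rampPulse_nonneg hδ.le i), mul_comm M]
  exact mul_le_mul_of_nonneg_left (hv i) (rampPulse_nonneg hδ.le i)

theorem rampSum_add_period (hδ : 0 < δ) {C : ℕ} (hper : ∀ i, v (i + C) = v i)
    (ht : t₀ ≤ t) :
    rampSum t₀ δ v (t + C * δ) = rampSum t₀ δ v t + δ * ∑ i ∈ Finset.range C, v i := by
  obtain ⟨N, hN⟩ := exists_le_add_nat_mul hδ t₀ t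
  have hN' : t + C * δ ≤ t₀ + (C + N : ℕ) * δ := by push_cast; linarith
  rw [rampSum_eq_sum_range hδ.le hN', Finset.sum_range_add, rampSum_eq_sum_range hδ.le hN,
    Finset.mul_sum, add_comm]
  congr 1
  · refine Finset.sum_congr rfl fun i _ => ?_
    rw [add_comm C i, rampPulse_add_add_mul, hper]
  · refine Finset.sum_congr rfl fun i hi => ?_
    have hiC : (i : ℝ) + 1 ≤ C := by exact_mod_cast Finset.mem_range.1 hi
    rw [rampPulse_eq_of_le hδ.le (by nlinarith)]

end Ramp

theorem exp_neg_mul_sub_eq (c a x : ℝ) : exp (-c * (x - a)) = exp (c * a) * exp (-c * x) := by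
  rw [← exp_add]; ring_nf

theorem integrableOn_exp_neg_mul_sub_s12 (a : ℝ) {c : ℝ} (hc : 0 < c) :
    IntegrableOn (fun x => exp (-c * (x - a))) (Ioi a) := by
  simp_rw [exp_neg_mul_sub_eq c a]
  exact (exp_neg_integrableOn_Ioi a hc).const_mul _

theorem integral_exp_neg_mul_sub_s12 (a : ℝ) {c : ℝ} (hc : 0 < c) :
    ∫ x in Ioi a, exp (-c * (x - a)) = c⁻¹ := by
  simp_rw [exp_neg_mul_sub_eq c a]
  rw [integral_const_mul, integral_exp_mul_Ioi (neg_neg_iff_pos.2 hc), neg_div_neg_eq,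
    ← mul_div_assoc, ← exp_add, neg_mul, add_neg_cancel, exp_zero, one_div]

theorem setIntegral_Ioi_add (g : ℝ → ℝ) (a T : ℝ) :
    ∫ x in Ioi (a + T), g x = ∫ x in Ioi a, g (x + T) := by
  rw [← image_add_const_Ioi]
  exact (measurePreserving_add_right volume T).setIntegral_image_emb
    (measurableEmbedding_addRight T) g _

theorem mul_exp_neg_mul_le {η : ℝ} (hη : 0 < η) (s : ℝ) :
    s * exp (-η * s) ≤ 2 / η * exp (-(η / 2) * s) := by
  have hs : s ≤ 2 / η * exp (η / 2 * s) := by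
    rw [div_mul_eq_mul_div, le_div_iff₀ hη]
    linarith [add_one_le_exp (η / 2 * s)]
  calc s * exp (-η * s) ≤ 2 / η * exp (η / 2 * s) * exp (-η * s) :=
        mul_le_mul_of_nonneg_right hs (exp_pos _).le
    _ = 2 / η * exp (-(η / 2) * s) := by rw [mul_assoc, ← exp_add]; ring_nf

theorem integrableOn_exp_neg_mul_sub_mul_s12 {η a A B : ℝ} {f : ℝ → ℝ} (hη : 0 < η)
    (hB : 0 ≤ B) (hf : AEStronglyMeasurable f (volume.restrict (Ioi a)))
    (hbound : ∀ x ∈ Ioi a, |f x| ≤ A + B * (x - a)) :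
    IntegrableOn (fun x => exp (-η * (x - a)) * f x) (Ioi a) := by
  have hdom : IntegrableOn
      (fun x => A * exp (-η * (x - a)) + B * (2 / η * exp (-(η / 2) * (x - a)))) (Ioi a) :=
    ((integrableOn_exp_neg_mul_sub_s12 a hη).const_mul A).add
      (((integrableOn_exp_neg_mul_sub_s12 a (half_pos hη)).const_mul _).const_mul B)
  have hexp : Continuous fun x => exp (-η * (x - a)) := by fun_prop
  refine hdom.mono' (hexp.aestronglyMeasurable.mul hf) ?_
  filter_upwards [ae_restrict_mem measurableSet_Ioi] with x hx
  rw [norm_mul, norm_of_nonneg (exp_pos _).le, Real.norm_eq_abs]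
  calc exp (-η * (x - a)) * |f x| ≤ exp (-η * (x - a)) * (A + B * (x - a)) :=
        mul_le_mul_of_nonneg_left (hbound x hx) (exp_pos _).le
    _ = A * exp (-η * (x - a)) + B * ((x - a) * exp (-η * (x - a))) := by ring
    _ ≤ _ := add_le_add_right (mul_le_mul_of_nonneg_left (mul_exp_neg_mul_le hη _) hB) _

theorem stableDivergentInit_add_of_shift {η a T S : ℝ} {f : ℝ → ℝ} (hη : 0 < η)
    (hint : IntegrableOn (fun x => exp (-η * (x - a)) * f x) (Ioi a))
    (hshift : ∀ x ∈ Ioi a, f (x + T) = f x + S) :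
    stableDivergentInit η (a + T) f = stableDivergentInit η a f + S := by
  have hsplit : ∫ x in Ioi (a + T), exp (-η * (x - (a + T))) * f x
      = ∫ x in Ioi a, (exp (-η * (x - a)) * f x + exp (-η * (x - a)) * S) := by
    rw [setIntegral_Ioi_add]
    refine setIntegral_congr_fun measurableSet_Ioi fun x hx => ?_
    rw [hshift x hx, add_sub_add_right_eq_sub, mul_add]
  unfold stableDivergentInit
  rw [hsplit, integral_add hint ((integrableOn_exp_neg_mul_sub_s12 a hη).mul_const S),
    integral_mul_const, integral_exp_neg_mul_sub_s12 a hη, mul_add, mul_inv_cancel_left₀ hη.ne']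

theorem stmt_12_general (η δ γ tk xzk : ℝ) (hη : 0 < η) (hδ : 0 < δ) (hγ : 0 ≤ γ)
    (C : ℕ)
    (v : ℕ → ℝ) (hper : ∀ i, v (i + C) = v i) (hv : ∀ i, |v i| ≤ γ)
    (xz : ℝ → ℝ)
    (hxz : ∀ t, xz t = xzk + ∑' i : ℕ,
      (max (t - (tk + i * δ)) 0 - max (t - (tk + (i + 1) * δ)) 0) * v i)
    (xuk xukC : ℝ)
    (hxuk : xuk = η * ∫ τ in Set.Ioi tk, Real.exp (-η * (τ - tk)) * xz τ)
    (hxukC : xukC = η * ∫ τ in Set.Ioi (tk + C * δ),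
        Real.exp (-η * (τ - (tk + C * δ))) * xz τ) :
    xukC - xz (tk + C * δ) = xuk - xzk := by
  have hxz_ramp : ∀ t, xz t = xzk + rampSum tk δ v t := hxz
  have hshift : ∀ t, tk ≤ t → xz (t + C * δ) = xz t + δ * ∑ i ∈ Finset.range C, v i :=
    fun t ht => by rw [hxz_ramp, hxz_ramp, rampSum_add_period hδ hper ht, add_assoc]
  have hcont : Continuous xz :=
    funext hxz_ramp ▸ continuous_const.add (continuous_rampSum hδ)
  have hbound : ∀ τ ∈ Ioi tk, |xz τ| ≤ |xzk| + γ * (τ - tk) := fun τ hτ => by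
    have h := abs_rampSum_le (t₀ := tk) (t := τ) hδ hv
    rw [max_eq_left (sub_nonneg.2 (le_of_lt hτ))] at h
    rw [hxz_ramp]
    exact (abs_add_le _ _).trans (add_le_add_right h _)
  have hxu : xukC = xuk + δ * ∑ i ∈ Finset.range C, v i := by
    rw [hxukC, hxuk]
    exact stableDivergentInit_add_of_shift hη
      (integrableOn_exp_neg_mul_sub_mul_s12 hη hγ hcont.aestronglyMeasurable hbound)
      fun t ht => hshift t (le_of_lt ht)
  rw [hxu, hshift tk le_rfl, hxz_ramp tk, rampSum_self hδ.le]
  ring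

/-- Proposition 3, periodic-tail terminal constraint: if the ZMP velocity
samples are `C`-periodic and bounded by `γ`, then
`x_u^{k+C} − x_z(t_{k+C}) = x_u^k − x_z^k`. -/
theorem stmt_12 (η δ γ tk xzk : ℝ) (hη : 0 < η) (hδ : 0 < δ) (hγ : 0 ≤ γ)
    (C : ℕ) (hC : 0 < C)
    (v : ℕ → ℝ) (hper : ∀ i, v (i + C) = v i) (hv : ∀ i, |v i| ≤ γ)
    (xz : ℝ → ℝ)
    (hxz : ∀ t, xz t = xzk + ∑' i : ℕ,
      (max (t - (tk + i * δ)) 0 - max (t - (tk + (i + 1) * δ)) 0) * v i)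
    (xuk xukC : ℝ)
    (hxuk : xuk = η * ∫ τ in Set.Ioi tk, Real.exp (-η * (τ - tk)) * xz τ)
    (hxukC : xukC = η * ∫ τ in Set.Ioi (tk + C * δ),
        Real.exp (-η * (τ - (tk + C * δ))) * xz τ) :
    xukC - xz (tk + C * δ) = xuk - xzk :=
  stmt_12_general η δ γ tk xzk hη hδ hγ C v hper hv xz hxz xuk xukC hxuk hxukC
end
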